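/- arXiv:1601.06254 — 4 statements merged into one kernel-verified Lean document; each statement's English description precedes it below -/
import Mathlib

section
/- Let A ⊆ L be a Lie subalgebra and ∇ : L → End(L/A) a K-linear map. Define the torsion T(l,l') = ∇_l(l' mod A) − ∇_{l'}(l mod A) − ([l,l'] mod A). Then T descends to a well-defined bilinear map (L/A) × (L/A) → L/A (i.e., T(l,l') depends only on l mod A and l' mod A) if and only if ∇ extends the A-action, i.e., ∇_a(l mod A) = [a,l] mod A for all a ∈ A, l ∈ L. -/
/-!
Writing `T` for the torsion, `T` is additive in its first argument and antisymmetric, and for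
`a ∈ A` it reduces to `T(a, l) = ∇_a π(l) − π⁅a, l⁆` because `π a = 0`. Hence `T` depends only on
the classes of its arguments exactly when `T(a, l) = 0` for all `a ∈ A`, which is the condition that
`∇` extends the `A`-action.
-/

namespace LieAlgebra

variable {K L M : Type*} [CommRing K] [LieRing L] [LieAlgebra K L] [AddCommGroup M] [Module K M]

def torsion (π : L →ₗ[K] M) (D : L →ₗ[K] Module.End K M) (l l' : L) : M :=
  D l (π l') - D l' (π l) - π ⁅l, l'⁆

variable (π : L →ₗ[K] M) (D : L →ₗ[K] Module.End K M)

theorem torsion_add_left (l m l' : L) :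
    torsion π D (l + m) l' = torsion π D l l' + torsion π D m l' := by
  simp only [torsion, map_add, LinearMap.add_apply, add_lie]
  abel

theorem torsion_swap (l l' : L) : torsion π D l' l = -torsion π D l l' := by
  simp only [torsion, ← lie_skew l l', map_neg]
  abel

theorem torsion_zero_left (l : L) : torsion π D 0 l = 0 := by
  simp [torsion]

theorem torsion_of_map_eq_zero {a : L} (ha : π a = 0) (l : L) :
    torsion π D a l = D a (π l) - π ⁅a, l⁆ := by
  simp [torsion, ha]

theorem torsion_congr_left (h : ∀ a, π a = 0 → ∀ l, D a (π l) = π ⁅a, l⁆) {l₁ l₁' : L}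
    (h₁ : π l₁ = π l₁') (l : L) : torsion π D l₁ l = torsion π D l₁' l := by
  have hker : π (l₁' - l₁) = 0 := by rw [map_sub, h₁, sub_self]
  calc torsion π D l₁ l = torsion π D l₁ l + torsion π D (l₁' - l₁) l := by
        rw [torsion_of_map_eq_zero π D hker, h _ hker, sub_self, add_zero]
    _ = torsion π D l₁' l := by rw [← torsion_add_left, add_sub_cancel]

theorem torsion_congr_iff :
    (∀ l₁ l₂ l₁' l₂' : L, π l₁ = π l₁' → π l₂ = π l₂' →
        torsion π D l₁ l₂ = torsion π D l₁' l₂') ↔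
      ∀ a, π a = 0 → ∀ l, D a (π l) = π ⁅a, l⁆ := by
  constructor
  · intro h a ha l
    have h0 : torsion π D a l = torsion π D 0 l := h a l 0 l (by rw [ha, map_zero]) rfl
    rwa [torsion_of_map_eq_zero π D ha, torsion_zero_left, sub_eq_zero] at h0
  · intro h l₁ l₂ l₁' l₂' h₁ h₂
    calc torsion π D l₁ l₂ = -torsion π D l₂ l₁' := by
          rw [torsion_congr_left π D h h₁, torsion_swap]
      _ = torsion π D l₁' l₂' := by
          rw [torsion_congr_left π D h h₂, ← torsion_swap]

end LieAlgebra

/-- For a Lie subalgebra `A ⊆ L` and a K-linear `∇ : L → End(L/A)`,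
the torsion `T(l,l') = ∇_l π(l') − ∇_{l'} π(l) − π[l,l']` descends to a bilinear
map `(L/A) × (L/A) → L/A` iff `∇` extends the A-action, i.e.
`∇_a π(l) = π⁅a,l⁆` for all `a ∈ A`, `l ∈ L`. -/
theorem torsion_descends_iff_extends_action
    (K : Type*) [Field K] (L : Type*) [LieRing L] [LieAlgebra K L]
    (A : LieSubalgebra K L)
    (D : L →ₗ[K] Module.End K (L ⧸ A.toSubmodule))
    (π : L →ₗ[K] L ⧸ A.toSubmodule) (hπ : π = A.toSubmodule.mkQ)
    (T : L → L → L ⧸ A.toSubmodule)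
    (hT : ∀ l l', T l l' = D l (π l') - D l' (π l) - π ⁅l, l'⁆) :
    (∀ l₁ l₂ l₁' l₂' : L, π l₁ = π l₁' → π l₂ = π l₂' → T l₁ l₂ = T l₁' l₂')
      ↔ (∀ (a : A) (l : L), D (a : L) (π l) = π ⁅(a : L), l⁆) := by
  obtain rfl : T = LieAlgebra.torsion π D := funext₂ hT
  have hker : ∀ a, π a = 0 ↔ a ∈ A := by
    simp [hπ, Submodule.Quotient.mk_eq_zero]
  rw [LieAlgebra.torsion_congr_iff]
  exact ⟨fun h a => h a ((hker a).2 a.2), fun h a ha => h ⟨a, (hker a).1 ha⟩⟩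
end

section
/- Let A ⊆ L be a Lie subalgebra, E an A-module, and ∇, ∇' two K-linear maps L → End(E) both extending the A-action on E. Define At^∇ : A → Hom(L/A ⊗ E, E) by At^∇(a)(l mod A, e) = R^∇(a,l)e where R^∇ is the curvature. Then At^∇ − At^{∇'} is a coboundary in the Chevalley–Eilenberg complex of A with values in Hom(L/A ⊗ E, E); explicitly, At^∇ − At^{∇'} = d_A(β) where β ∈ Hom(L/A ⊗ E, E) is given by β(l mod A, e) = ∇_l e − ∇'_l e. -/
/-!
Where `∇` and `∇'` agree, i.e. on `A`, the commutator parts of the two curvatures differ only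
through `∇_l − ∇'_l`, and the derivative terms only through `∇_{⁅a,l⁆} − ∇'_{⁅a,l⁆}`; what
remains is `⁅a, β l⁆ − β ⁅a, l⁆`, which is `d_A β (a)` evaluated at `(l, e)`.
-/

namespace LieAlgebra

variable {K L E : Type*} [CommRing K] [LieRing L] [LieAlgebra K L] [AddCommGroup E] [Module K E]

def curvature (D : L →ₗ[K] Module.End K E) (l l' : L) : Module.End K E :=
  ⁅D l, D l'⁆ - D ⁅l, l'⁆

theorem curvature_sub_curvature_of_apply_eq (D D' : L →ₗ[K] Module.End K E) {a : L}
    (ha : D a = D' a) (l : L) :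
    curvature D a l - curvature D' a l = ⁅D' a, (D - D') l⁆ - (D - D') ⁅a, l⁆ := by
  simp only [curvature, ha, LinearMap.sub_apply, Ring.lie_def, mul_sub, sub_mul]
  abel

end LieAlgebra

open LieAlgebra

theorem atiyah_cocycle_difference_is_coboundary_general
    (K : Type*) [Field K] (L : Type*) [LieRing L] [LieAlgebra K L]
    (A : LieSubalgebra K L)
    (E : Type*) [AddCommGroup E] [Module K E]
    [LieRingModule A E]
    (D D' : L →ₗ[K] Module.End K E)
    (hD : ∀ (a : A) (e : E), D (a : L) e = ⁅a, e⁆)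
    (hD' : ∀ (a : A) (e : E), D' (a : L) e = ⁅a, e⁆)
    (R R' : L → L → Module.End K E)
    (hR : ∀ l l', R l l' = D l * D l' - D l' * D l - D ⁅l, l'⁆)
    (hR' : ∀ l l', R' l l' = D' l * D' l' - D' l' * D' l - D' ⁅l, l'⁆)
    (β : L → E →ₗ[K] E) (hβ : ∀ l, β l = D l - D' l) :
    (∀ l l' : L, l - l' ∈ A.toSubmodule → β l = β l') ∧
    (∀ (a : A) (l : L) (e : E),
      R (a : L) l e - R' (a : L) l e
        = ⁅a, β l e⁆ - β ⁅(a : L), l⁆ e - β l ⁅a, e⁆) := by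
  have hagree (a : A) : D a = D' a := LinearMap.ext fun e => (hD a e).trans (hD' a e).symm
  have hβ_eq : β = ⇑(D - D') := funext hβ
  have hR_eq : R = curvature D := funext₂ hR
  have hR'_eq : R' = curvature D' := funext₂ hR'
  subst hβ_eq hR_eq hR'_eq
  refine ⟨fun l l' hl => LinearMap.sub_mem_ker_iff.mp ?_, fun a l e => ?_⟩
  · simpa [sub_eq_zero] using hagree ⟨l - l', hl⟩
  · rw [← LinearMap.sub_apply, curvature_sub_curvature_of_apply_eq D D' (hagree a)]
    simp only [Ring.lie_def, LinearMap.sub_apply, Module.End.mul_apply, hD']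
    abel

/-- Let `A ⊆ L` be a Lie subalgebra, `E` an `A`-module, and
`∇, ∇'` two K-linear maps `L → End E` extending the A-action.  Then
`∇ − ∇'` descends to `β : L/A → End E` (it only depends on `l mod A`) and
`At^∇ − At^{∇'} = d_A β`, i.e. for all `a ∈ A`, `l ∈ L`, `e ∈ E`:
`R^∇(a,l)e − R^{∇'}(a,l)e = a·β(l̄,e) − β(π⁅a,l⁆,e) − β(l̄,a·e)`
(written on representatives). -/
theorem atiyah_cocycle_difference_is_coboundary
    (K : Type*) [Field K] (L : Type*) [LieRing L] [LieAlgebra K L]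
    (A : LieSubalgebra K L)
    (E : Type*) [AddCommGroup E] [Module K E]
    [LieRingModule A E] [LieModule K A E]
    (D D' : L →ₗ[K] Module.End K E)
    (hD : ∀ (a : A) (e : E), D (a : L) e = ⁅a, e⁆)
    (hD' : ∀ (a : A) (e : E), D' (a : L) e = ⁅a, e⁆)
    (R R' : L → L → Module.End K E)
    (hR : ∀ l l', R l l' = D l * D l' - D l' * D l - D ⁅l, l'⁆)
    (hR' : ∀ l l', R' l l' = D' l * D' l' - D' l' * D' l - D' ⁅l, l'⁆)
    (β : L → E →ₗ[K] E) (hβ : ∀ l, β l = D l - D' l) :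
    (∀ l l' : L, l - l' ∈ A.toSubmodule → β l = β l') ∧
    (∀ (a : A) (l : L) (e : E),
      R (a : L) l e - R' (a : L) l e
        = ⁅a, β l e⁆ - β ⁅(a : L), l⁆ e - β l ⁅a, e⁆) :=
  atiyah_cocycle_difference_is_coboundary_general K L A E D D' hD hD' R R' hR hR' β hβ
end

section
/- With the notation of the previous statement, At^∇ is a well-defined Chevalley–Eilenberg 1-cocycle: (i) R^∇(a,l)e depends on l only through l mod A, and (ii) d_A(At^∇)(a,a') = a·(At^∇(a')) − a'·(At^∇(a)) − At^∇([a,a']) = 0 for all a,a' ∈ A. -/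
/-!
`R^∇` is the curvature of `∇`, which is antisymmetric and additive in each argument, and which
vanishes on `A × A` because `∇` restricts to a representation of `A`. Additivity then gives (i),
and (ii) is the second Bianchi identity `∑_cyc ([∇x, R(y,z)] - R([x,y],z)) = 0` at `(a, a', l)`,
where the term `[∇l, R(a,a')]` vanishes.
-/

namespace AddMonoidHom

variable {L M : Type*} [LieRing L] [LieRing M]

def curvature (D : L →+ M) (x y : L) : M := ⁅D x, D y⁆ - D ⁅x, y⁆

variable (D : L →+ M)

theorem curvature_sub_right (x y z : L) :
    D.curvature x (y - z) = D.curvature x y - D.curvature x z := by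
  simp only [curvature, map_sub, lie_sub]
  abel

theorem curvature_neg_right (x y : L) : D.curvature x (-y) = -D.curvature x y := by
  simp only [curvature, map_neg, lie_neg]
  abel

theorem curvature_swap (x y : L) : D.curvature y x = -D.curvature x y := by
  simp only [curvature, ← lie_skew x y, map_neg, ← lie_skew (D x) (D y)]
  abel

theorem curvature_bianchi (x y z : L) :
    ⁅D x, D.curvature y z⁆ + ⁅D y, D.curvature z x⁆ + ⁅D z, D.curvature x y⁆ =
      D.curvature ⁅x, y⁆ z + D.curvature ⁅y, z⁆ x + D.curvature ⁅z, x⁆ y := by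
  have hM := eq_neg_of_add_eq_zero_right (lie_jacobi (D x) (D y) (D z))
  have hL : D ⁅z, ⁅x, y⁆⁆ = -(D ⁅x, ⁅y, z⁆⁆ + D ⁅y, ⁅z, x⁆⁆) := by
    rw [← map_add, ← map_neg, ← eq_neg_of_add_eq_zero_right (lie_jacobi x y z)]
  simp only [curvature, lie_sub, ← lie_skew (D ⁅_, _⁆) (D _), ← lie_skew ⁅_, _⁆ _, map_neg, hM,
    hL]
  abel

theorem curvature_cocycle {x y : L} (hxy : D.curvature x y = 0) (z : L) :
    ⁅D x, D.curvature y z⁆ - D.curvature y ⁅x, z⁆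
      - (⁅D y, D.curvature x z⁆ - D.curvature x ⁅y, z⁆) - D.curvature ⁅x, y⁆ z = 0 := by
  have h := D.curvature_bianchi x y z
  rw [hxy, lie_zero, curvature_swap D x z, curvature_swap D y ⁅z, x⁆, ← lie_skew z x,
    curvature_neg_right, curvature_swap D x ⁅y, z⁆, lie_neg, ← sub_eq_zero] at h
  rw [← h]
  abel

end AddMonoidHom

attribute [local instance 100] LieRing.ofAssociativeRing

theorem curvature_eq_zero_of_extends_action {K L E : Type*} [CommRing K] [LieRing L]
    [LieAlgebra K L] {A : LieSubalgebra K L} [AddCommGroup E] [Module K E] [LieRingModule A E]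
    (D : L →ₗ[K] Module.End K E) (hD : ∀ (a : A) (e : E), D (a : L) e = ⁅a, e⁆) (a b : A) :
    D.toAddMonoidHom.curvature a b = 0 := by
  ext e
  rw [AddMonoidHom.curvature, ← LieSubalgebra.coe_bracket]
  simp only [LinearMap.toAddMonoidHom_coe, Ring.lie_def, LinearMap.sub_apply,
    Module.End.mul_apply, LinearMap.zero_apply, hD]
  rw [leibniz_lie]
  abel

theorem atiyah_cocycle_well_defined_and_closed_general
    (K : Type*) [Field K] (L : Type*) [LieRing L] [LieAlgebra K L]
    (A : LieSubalgebra K L)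
    (E : Type*) [AddCommGroup E] [Module K E]
    [LieRingModule A E]
    (D : L →ₗ[K] Module.End K E)
    (hD : ∀ (a : A) (e : E), D (a : L) e = ⁅a, e⁆)
    (R : L → L → Module.End K E)
    (hR : ∀ l l', R l l' = D l * D l' - D l' * D l - D ⁅l, l'⁆) :
    (∀ (a : A) (l l' : L), l - l' ∈ A.toSubmodule → R (a : L) l = R (a : L) l') ∧
    (∀ (a a' : A) (l : L) (e : E),
      (⁅a, R (a' : L) l e⁆ - R (a' : L) ⁅(a : L), l⁆ e - R (a' : L) l ⁅a, e⁆)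
      - (⁅a', R (a : L) l e⁆ - R (a : L) ⁅(a' : L), l⁆ e - R (a : L) l ⁅a', e⁆)
      - R ((⁅a, a'⁆ : A) : L) l e = 0) := by
  obtain rfl : R = D.toAddMonoidHom.curvature := by
    funext l l'
    rw [hR, AddMonoidHom.curvature, Ring.lie_def]
    rfl
  have hflat := curvature_eq_zero_of_extends_action D hD
  refine ⟨fun a l l' hl => ?_, fun a a' l e => ?_⟩
  · rw [← sub_eq_zero, ← AddMonoidHom.curvature_sub_right]
    exact hflat a ⟨l - l', hl⟩
  · have h := congrArg (· e) (D.toAddMonoidHom.curvature_cocycle (hflat a a') l)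
    simp only [Ring.lie_def, LinearMap.sub_apply, Module.End.mul_apply, LinearMap.zero_apply,
      LinearMap.toAddMonoidHom_coe, hD] at h
    rw [← h]
    abel

/-- With `A ⊆ L` a Lie subalgebra, `E` an `A`-module and
`∇ : L → End E` K-linear extending the A-action, the Atiyah cocycle
`At^∇(a)(l̄,e) = R^∇(a,l)e` is well defined ((i): `R^∇(a,l)e` depends only on
`l mod A`) and is a Chevalley–Eilenberg 1-cocycle ((ii): `d_A At^∇ = 0`),
written on representatives. -/
theorem atiyah_cocycle_well_defined_and_closed
    (K : Type*) [Field K] (L : Type*) [LieRing L] [LieAlgebra K L]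
    (A : LieSubalgebra K L)
    (E : Type*) [AddCommGroup E] [Module K E]
    [LieRingModule A E] [LieModule K A E]
    (D : L →ₗ[K] Module.End K E)
    (hD : ∀ (a : A) (e : E), D (a : L) e = ⁅a, e⁆)
    (R : L → L → Module.End K E)
    (hR : ∀ l l', R l l' = D l * D l' - D l' * D l - D ⁅l, l'⁆) :
    (∀ (a : A) (l l' : L), l - l' ∈ A.toSubmodule → R (a : L) l = R (a : L) l') ∧
    (∀ (a a' : A) (l : L) (e : E),
      (⁅a, R (a' : L) l e⁆ - R (a' : L) ⁅(a : L), l⁆ e - R (a' : L) l ⁅a, e⁆)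
      - (⁅a', R (a : L) l e⁆ - R (a : L) ⁅(a' : L), l⁆ e - R (a : L) l ⁅a', e⁆)
      - R ((⁅a, a'⁆ : A) : L) l e = 0) :=
  atiyah_cocycle_well_defined_and_closed_general K L A E D hD R hR
end

section
/- Let g = A ⊕ B be a Lie algebra direct sum of two subalgebras and ∇ : g → End(B) a linear map extending the A-action (∇_a b = pr_B[a,b]) with vanishing torsion. Then the curvature satisfies R(a,b)b' = R(a,b')b for all a ∈ A, b, b' ∈ B (symmetry of the Atiyah cocycle in the B-arguments). -/
/-!
Torsion-freeness expresses `∇_{[a,b]} b'` through `∇_{b'} ∇_a b` and `pr_B [[a,b],b']`, and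
`∇_a (∇_b b' - ∇_{b'} b)` through `pr_B [a,[b,b']]`. Substituting these into
`R(a,b)b' - R(a,b')b`, all `∇∇`-terms cancel and what is left is `pr_B` of the Jacobi
expression `[a,[b,b']] - [[a,b],b'] - [b,[a,b']] = 0`.
-/

namespace LieSubalgebra

variable {K L : Type*} [CommRing K] [LieRing L] [LieAlgebra K L] {B : LieSubalgebra K L}
  {prB : L →ₗ[K] B} {D : L →ₗ[K] Module.End K B}

variable (hfix : ∀ x : B, prB x = x)
  (htf : ∀ l l' : L, D l (prB l') - D l' (prB l) - prB ⁅l, l'⁆ = 0)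
include hfix htf

theorem apply_eq_of_torsionFree (l : L) (x : B) : D l x = D x (prB l) + prB ⁅l, x⁆ := by
  have h := htf l x
  rwa [hfix, sub_sub, sub_eq_zero] at h

theorem apply_sub_apply_swap_of_torsionFree (x y : B) : D x y - D y x = ⁅x, y⁆ := by
  rw [apply_eq_of_torsionFree hfix htf, hfix, ← coe_bracket, hfix, add_sub_cancel_left]

theorem curvature_apply_symm_of_torsionFree (a : L) (ha : ∀ x : B, D a x = prB ⁅a, x⁆)
    (b b' : B) :
    (D a * D b - D b * D a - D ⁅a, b⁆) b' = (D a * D b' - D b' * D a - D ⁅a, b'⁆) b := by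
  have hab : D ⁅a, b⁆ b' = D b' (D a b) + prB ⁅⁅a, (b : L)⁆, b'⁆ := by
    rw [apply_eq_of_torsionFree hfix htf, ha]
  have hab' : D ⁅a, b'⁆ b = D b (D a b') + prB ⁅⁅a, (b' : L)⁆, b⁆ := by
    rw [apply_eq_of_torsionFree hfix htf, ha]
  have hbb' : D a (D b b') = D a (D b' b) + prB ⁅a, ⁅(b : L), b'⁆⁆ := by
    rw [← sub_eq_iff_eq_add', ← map_sub, apply_sub_apply_swap_of_torsionFree hfix htf, ha,
      coe_bracket]
  have jacobi :
      ⁅a, ⁅(b : L), (b' : L)⁆⁆ = ⁅⁅a, (b : L)⁆, (b' : L)⁆ - ⁅⁅a, (b' : L)⁆, (b : L)⁆ := by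
    rw [leibniz_lie, ← lie_skew ⁅a, (b' : L)⁆, sub_neg_eq_add]
  simp only [LinearMap.sub_apply, Module.End.mul_apply]
  rw [hab, hab', hbb', jacobi, map_sub]
  abel

end LieSubalgebra

/-- For `g = A ⊕ B` a Lie algebra direct sum of subalgebras and a
torsion-free K-linear `∇ : g → End B` extending the A-action, the curvature
satisfies `R(a,b)b' = R(a,b')b` for `a ∈ A`, `b, b' ∈ B`. -/
theorem curvature_symmetry_matched_pair
    (K : Type*) [Field K] (L : Type*) [LieRing L] [LieAlgebra K L]
    (A B : LieSubalgebra K L)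
    (hc : IsCompl A.toSubmodule B.toSubmodule)
    (prB : L →ₗ[K] B)
    (hprB : prB = B.toSubmodule.linearProjOfIsCompl A.toSubmodule hc.symm)
    (D : L →ₗ[K] Module.End K B)
    (hext : ∀ (a : A) (b : B), D (a : L) b = prB ⁅(a : L), (b : L)⁆)
    (htf : ∀ l l' : L, D l (prB l') - D l' (prB l) - prB ⁅l, l'⁆ = 0)
    (R : L → L → Module.End K B)
    (hR : ∀ l l', R l l' = D l * D l' - D l' * D l - D ⁅l, l'⁆) :
    ∀ (a : A) (b b' : B), R (a : L) (b : L) b' = R (a : L) (b' : L) b := by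
  intro a b b'
  have hfix : ∀ x : B, prB x = x := fun x => by
    rw [hprB]
    exact Submodule.projectionOnto_apply_left hc.symm x
  rw [hR, hR]
  exact LieSubalgebra.curvature_apply_symm_of_torsionFree hfix htf a (hext a) b b'
end
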